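/- (Unbiasedness of randomized attention with S samples.) Let μ be the probability measure on ℝ^D whose density with respect to Lebesgue measure is the Gaussian mixture p(ω) = Σ_{m=1}^M π_m N(ω; q + k_m, I). If ω_1, …, ω_S are random vectors each distributed according to μ, then the expectation of the randomized attention estimator (1/S) Σ_{s=1}^S f(ω_s) equals the softmax attention output Σ_{m=1}^M π_m v_m. -/

import Mathlib

/-!
Completing the square gives `exp ⟨x, y⟩ N(ω; x + y, I) = N(ω; 0, I) ξ(x, ω) ξ(y, ω)`. Hence
`p(ω) = Z⁻¹ N(ω; 0, I) Σ_m ξ(q, ω) ξ(k_m, ω)` with `Z = Σ_m exp ⟨q, k_m⟩`, the denominator of `f`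
cancels against `p`, and `p(ω) f(ω) = Σ_m π_m N(ω; q + k_m, I) v_m`, whose integral is
`Σ_m π_m v_m`. The `S`-sample estimator has the same mean as each of its terms by linearity.
-/

open MeasureTheory Real
open scoped RealInnerProductSpace

noncomputable section

/-- `E D` is Euclidean space `ℝ^D`. -/
abbrev E (D : ℕ) := EuclideanSpace ℝ (Fin D)

/-- Gaussian density `N(ω; μ, I) = (2π)^{-D/2} exp(-‖ω - μ‖²/2)`. -/
def gaussN (D : ℕ) (μ ω : E D) : ℝ :=
  (2 * Real.pi) ^ (-(D : ℝ) / 2) * Real.exp (-‖ω - μ‖ ^ 2 / 2)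

/-- Positive randomized mapping `ξ(x, ω) = exp(⟨ω, x⟩ - ‖x‖²/2)`. -/
def xi (D : ℕ) (x ω : E D) : ℝ :=
  Real.exp (⟪ω, x⟫ - ‖x‖ ^ 2 / 2)

/-- The RA Gaussian-mixture density `p(ω) = Σ_m π_m N(ω; q + k_m, I)` with softmax
weights `π_m = exp(⟨q, k_m⟩)/Σ_{m'} exp(⟨q, k_{m'}⟩)`. -/
def raDensity (D M : ℕ) (q : E D) (k : Fin M → E D) (ω : E D) : ℝ :=
  ∑ m, (Real.exp ⟪q, k m⟫ / ∑ m', Real.exp ⟪q, k m'⟫) * gaussN D (q + k m) ω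

/-- The randomized-attention integrand
`f(ω) = (Σ_m ξ(q,ω) ξ(k_m,ω) v_m) / (Σ_{m'} ξ(q,ω) ξ(k_{m'},ω))`. -/
def raIntegrand (D M : ℕ) (q : E D) (k v : Fin M → E D) (ω : E D) : E D :=
  (∑ m', xi D q ω * xi D (k m') ω)⁻¹ • ∑ m, (xi D q ω * xi D (k m) ω) • v m

open Finset in
theorem integral_sampleMean_of_map_eq {Ω α F : Type*} [MeasurableSpace Ω] [MeasurableSpace α]
    [NormedAddCommGroup F] [NormedSpace ℝ F] {P : Measure Ω} {μ : Measure α} {S : ℕ}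
    (hS : S ≠ 0) {X : Fin S → Ω → α} (hX : ∀ s, AEMeasurable (X s) P)
    (hlaw : ∀ s, P.map (X s) = μ) {f : α → F} (hf : Integrable f μ) :
    ∫ a, (S : ℝ)⁻¹ • ∑ s, f (X s a) ∂P = ∫ x, f x ∂μ := by
  have hf_map : ∀ s, Integrable f (P.map (X s)) := fun s => (hlaw s).symm ▸ hf
  have integral_comp : ∀ s, ∫ a, f (X s a) ∂P = ∫ x, f x ∂μ := fun s => by
    rw [← integral_map (hX s) (hf_map s).aestronglyMeasurable, hlaw s]
  have hint : ∀ s, Integrable (fun a => f (X s a)) P := fun s =>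
    (hf_map s).comp_aemeasurable (hX s)
  rw [integral_smul, integral_finsetSum _ fun s _ => hint s]
  simp_rw [integral_comp]
  rw [sum_const, card_univ, Fintype.card_fin, ← Nat.cast_smul_eq_nsmul ℝ, smul_smul,
    inv_mul_cancel₀ (Nat.cast_ne_zero.mpr hS), one_smul]

theorem integral_gaussN (D : ℕ) (μ : E D) : ∫ ω, gaussN D μ ω = 1 := by
  calc ∫ ω, gaussN D μ ω
      = (2 * π) ^ (-(D : ℝ) / 2) * ∫ ω, (fun x : E D => rexp (-(1 / 2) * ‖x‖ ^ 2)) (ω - μ) := by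
        simp only [gaussN, integral_const_mul, neg_div, neg_mul, one_div, ← div_eq_inv_mul]
    _ = (2 * π) ^ (-(D : ℝ) / 2) * (π / (1 / 2)) ^ ((D : ℝ) / 2) := by
        rw [integral_sub_right_eq_self (fun x : E D => rexp (-(1 / 2) * ‖x‖ ^ 2)) μ,
          GaussianFourier.integral_rexp_neg_mul_sq_norm (by norm_num), finrank_euclideanSpace_fin]
    _ = 1 := by
        rw [show π / (1 / 2) = 2 * π by ring, ← rpow_add (by positivity), neg_div, neg_add_cancel,
          rpow_zero]

theorem integrable_gaussN (D : ℕ) (μ : E D) : Integrable (gaussN D μ) :=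
  .of_integral_ne_zero (by rw [integral_gaussN]; exact one_ne_zero)

theorem exp_inner_mul_gaussN_add (D : ℕ) (x y ω : E D) :
    rexp ⟪x, y⟫ * gaussN D (x + y) ω = gaussN D 0 ω * (xi D x ω * xi D y ω) := by
  simp only [gaussN, xi, sub_zero]
  rw [mul_left_comm, mul_assoc, ← exp_add, ← exp_add, ← exp_add]
  congr 2
  rw [norm_sub_sq_real, inner_add_right, norm_add_sq_real]
  ring

theorem raDensity_eq_mul_sum_xi (D M : ℕ) (q : E D) (k : Fin M → E D) (ω : E D) :
    raDensity D M q k ω =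
      (∑ m', rexp ⟪q, k m'⟫)⁻¹ * gaussN D 0 ω * ∑ m, xi D q ω * xi D (k m) ω := by
  simp only [raDensity, div_eq_inv_mul, mul_assoc, exp_inner_mul_gaussN_add, Finset.mul_sum]

theorem raDensity_nonneg (D M : ℕ) (q : E D) (k : Fin M → E D) (ω : E D) :
    0 ≤ raDensity D M q k ω := by
  unfold raDensity gaussN
  positivity

theorem measurable_ofReal_raDensity (D M : ℕ) (q : E D) (k : Fin M → E D) :
    Measurable fun ω => ENNReal.ofReal (raDensity D M q k ω) := by
  unfold raDensity gaussN
  fun_prop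

section

variable (D M : ℕ) [Nonempty (Fin M)] (q : E D) (k v : Fin M → E D)

theorem raDensity_smul_raIntegrand (ω : E D) :
    raDensity D M q k ω • raIntegrand D M q k v ω =
      ∑ m, ((rexp ⟪q, k m⟫ / ∑ m', rexp ⟪q, k m'⟫) * gaussN D (q + k m) ω) • v m := by
  have hpos : 0 < ∑ m', xi D q ω * xi D (k m') ω :=
    Finset.sum_pos (fun m _ => mul_pos (exp_pos _) (exp_pos _)) Finset.univ_nonempty
  rw [raDensity_eq_mul_sum_xi, raIntegrand, smul_smul, mul_assoc _ (∑ m, _),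
    mul_inv_cancel₀ hpos.ne', mul_one, Finset.smul_sum]
  refine Finset.sum_congr rfl fun m _ => ?_
  rw [smul_smul, div_eq_inv_mul, mul_assoc _ (rexp _), exp_inner_mul_gaussN_add, mul_assoc]

theorem toReal_ofReal_raDensity_smul_raIntegrand (ω : E D) :
    (ENNReal.ofReal (raDensity D M q k ω)).toReal • raIntegrand D M q k v ω =
      ∑ m, ((rexp ⟪q, k m⟫ / ∑ m', rexp ⟪q, k m'⟫) * gaussN D (q + k m) ω) • v m := by
  rw [ENNReal.toReal_ofReal (raDensity_nonneg D M q k ω), raDensity_smul_raIntegrand]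

theorem integrable_raIntegrand :
    Integrable (raIntegrand D M q k v)
      (volume.withDensity fun ω => ENNReal.ofReal (raDensity D M q k ω)) := by
  rw [integrable_withDensity_iff_integrable_smul' (measurable_ofReal_raDensity D M q k)
    (ae_of_all _ fun _ => ENNReal.ofReal_lt_top)]
  simp_rw [toReal_ofReal_raDensity_smul_raIntegrand]
  exact integrable_finsetSum _ fun m _ => ((integrable_gaussN D _).const_mul _).smul_const _

theorem integral_raIntegrand :
    ∫ ω, raIntegrand D M q k v ω
        ∂(volume.withDensity fun ω => ENNReal.ofReal (raDensity D M q k ω)) =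
      ∑ m, (rexp ⟪q, k m⟫ / ∑ m', rexp ⟪q, k m'⟫) • v m := by
  rw [integral_withDensity_eq_integral_toReal_smul (measurable_ofReal_raDensity D M q k)
    (ae_of_all _ fun _ => ENNReal.ofReal_lt_top)]
  simp_rw [toReal_ofReal_raDensity_smul_raIntegrand]
  rw [integral_finsetSum _ fun m _ => ((integrable_gaussN D _).const_mul _).smul_const _]
  refine Finset.sum_congr rfl fun m _ => ?_
  rw [integral_smul_const, integral_const_mul, integral_gaussN, mul_one]

end

theorem randomized_attention_unbiased_general (D M S : ℕ) (hS : 1 ≤ S)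
    (q : E D) (k v : Fin M → E D)
    {Ω : Type} [MeasurableSpace Ω] (P : Measure Ω)
    (X : Fin S → Ω → E D) (hX : ∀ s, Measurable (X s))
    (hlaw : ∀ s, Measure.map (X s) P =
      volume.withDensity (fun ω => ENNReal.ofReal (raDensity D M q k ω))) :
    ∫ a, (S : ℝ)⁻¹ • ∑ s, raIntegrand D M q k v (X s a) ∂P =
      ∑ m, (Real.exp ⟪q, k m⟫ / ∑ m', Real.exp ⟪q, k m'⟫) • v m := by
  rcases isEmpty_or_nonempty (Fin M) with hM | hM
  · simp [raIntegrand]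
  rw [integral_sampleMean_of_map_eq (by omega) (fun s => (hX s).aemeasurable) hlaw
    (integrable_raIntegrand D M q k v), integral_raIntegrand]

/-- Unbiasedness of randomized attention with `S` samples: if `ω_1, …, ω_S` are random
vectors each distributed according to the probability measure with density `p` (the RA
Gaussian mixture), then the expectation of `(1/S) Σ_s f(ω_s)` equals the softmax
attention output `Σ_m π_m v_m`. -/
theorem randomized_attention_unbiased (D M S : ℕ) (hS : 1 ≤ S)
    (q : E D) (k v : Fin M → E D)
    {Ω : Type} [MeasurableSpace Ω] (P : Measure Ω) [IsProbabilityMeasure P]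
    (X : Fin S → Ω → E D) (hX : ∀ s, Measurable (X s))
    (hlaw : ∀ s, Measure.map (X s) P =
      volume.withDensity (fun ω => ENNReal.ofReal (raDensity D M q k ω))) :
    ∫ a, (S : ℝ)⁻¹ • ∑ s, raIntegrand D M q k v (X s a) ∂P =
      ∑ m, (Real.exp ⟪q, k m⟫ / ∑ m', Real.exp ⟪q, k m'⟫) • v m :=
  randomized_attention_unbiased_general D M S hS q k v P X hX hlaw
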